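/- arXiv:2411.14173 — 2 statements merged into one kernel-verified Lean document; each statement's English description precedes it below -/
import Mathlib

section
/- Interior continuity of the Green operator for d = 2 (Step 1 in the proof of Theorem 1.2): Let Ω be a bounded domain in ℝ² and μ a positive finite Borel measure on ℝ² with supp(μ) ⊆ closure(Ω) and μ(Ω) > 0. Assume dim_∞(μ) > 0. Let h : closure(Ω) × closure(Ω) → ℝ be continuous and let G(x,y) := −(1/(2π)) ln|x−y| + h(x,y) for x ≠ y. Then for every f ∈ L²(Ω,μ), the function x ↦ ∫_Ω G(x,y) f(y) dμ(y) is continuous on Ω. -/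
/-!
Split `-(1/2π) log |x-y|` as `-(1/2π) log (max |x-y| ε) + (1/2π) log⁺ (ε/|x-y|)`. The truncated
kernel is continuous and bounded on `closure Ω × closure Ω`, so by dominated convergence it gives
an operator with continuous output. Positive `L^∞`-dimension gives `μ(B̄(x,δ)) ≤ C δ^s` uniformly in
`x`, and the layer-cake formula turns this into `‖log⁺ (ε/|x-·|)‖²_{L²(μ)} ≤ C' ε^s`, uniformly in
`x`. By Cauchy–Schwarz the truncated operators therefore converge to `G_μ f` uniformly on `Ω` as
`ε → 0`, and a uniform limit of continuous functions is continuous.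
-/

open MeasureTheory Metric Filter

/-- The topological support of a measure: points all of whose neighborhoods have
positive measure. -/
def measSupport (μ : Measure (EuclideanSpace ℝ (Fin 2))) :
    Set (EuclideanSpace ℝ (Fin 2)) :=
  {x | ∀ ε : ℝ, 0 < ε → 0 < μ (ball x ε)}

/-- The lower `L^∞`-dimension of a measure:
`liminf_{δ→0⁺} ln( sup_{x ∈ supp(μ)} μ(B̄_δ(x)) ) / ln δ`. -/
noncomputable def lowerLinftyDim (μ : Measure (EuclideanSpace ℝ (Fin 2))) : ℝ :=
  Filter.liminf
    (fun δ : ℝ =>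
      Real.log ((⨆ x ∈ measSupport μ, μ (closedBall x δ)).toReal) / Real.log δ)
    (nhdsWithin 0 (Set.Ioi 0))

open Set Topology Real Function
open scoped ENNReal

lemma log_eq_log_max_sub_posLog_div {d ε : ℝ} (hd : 0 < d) (hε : 0 < ε) :
    log d = log (max d ε) - log⁺ (ε / d) := by
  rcases le_total ε d with hεd | hdε
  · rw [max_eq_left hεd, (posLog_eq_zero_iff _).2, sub_zero]
    rw [abs_of_pos (div_pos hε hd)]
    exact div_le_one_of_le₀ hεd hd.le
  · rw [max_eq_right hdε, posLog_eq_log, log_div hε.ne' hd.ne']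
    · ring
    · rw [abs_of_pos (div_pos hε hd)]
      exact (one_le_div hd).2 hdε

lemma le_rpow_of_le_log_div_log {a δ b : ℝ} (ha : 0 ≤ a) (hδ : δ ∈ Ioo 0 1)
    (h : b ≤ log a / log δ) : a ≤ δ ^ b := by
  rcases ha.eq_or_lt with rfl | ha
  · exact rpow_nonneg hδ.1.le b
  rw [le_div_iff_of_neg (log_neg hδ.1 hδ.2)] at h
  calc a = exp (log a) := (exp_log ha).symm
    _ ≤ exp (log δ * b) := exp_le_exp.2 (by linarith)
    _ = δ ^ b := (rpow_def_of_pos hδ.1 b).symm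

lemma measure_compl_measSupport (μ : Measure (EuclideanSpace ℝ (Fin 2))) :
    μ (measSupport μ)ᶜ = 0 := by
  refine measure_null_of_locally_null _ fun x hx => ?_
  simp only [measSupport, mem_compl_iff, mem_ofPred_eq, not_forall, not_lt,
    nonpos_iff_eq_zero] at hx
  obtain ⟨ε, hε, hzero⟩ := hx
  exact ⟨ball x ε, nhdsWithin_le_nhds (ball_mem_nhds x hε), hzero⟩

lemma measure_closedBall_le_of_forall_mem_measSupport {μ : Measure (EuclideanSpace ℝ (Fin 2))}
    {δ : ℝ} {m : ℝ≥0∞} (hm : ∀ p ∈ measSupport μ, μ (closedBall p (2 * δ)) ≤ m)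
    (x : EuclideanSpace ℝ (Fin 2)) : μ (closedBall x δ) ≤ m := by
  by_cases hmeets : (measSupport μ ∩ closedBall x δ).Nonempty
  · obtain ⟨p, hp, hpx⟩ := hmeets
    refine (measure_mono fun y hy => ?_).trans (hm p hp)
    rw [mem_closedBall] at hy hpx ⊢
    linarith [dist_triangle_right y p x]
  · rw [not_nonempty_iff_eq_empty, ← disjoint_iff_inter_eq_empty] at hmeets
    rw [measure_mono_null hmeets.subset_compl_left (measure_compl_measSupport μ)]
    exact zero_le

lemma eventually_measure_closedBall_le_rpow {μ : Measure (EuclideanSpace ℝ (Fin 2))}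
    [IsFiniteMeasure μ] {b : ℝ} (hb0 : 0 ≤ b) (hb : b < lowerLinftyDim μ) :
    ∀ᶠ δ in 𝓝[>] 0, ∀ p ∈ measSupport μ, μ (closedBall p δ) ≤ ENNReal.ofReal (δ ^ b) := by
  have hbdd : IsBoundedUnder (· ≥ ·) (𝓝[>] 0) fun δ : ℝ =>
      log ((⨆ x ∈ measSupport μ, μ (closedBall x δ)).toReal) / log δ := by
    by_contra hunbdd
    rw [lowerLinftyDim, Real.liminf_of_not_isBoundedUnder hunbdd] at hb
    linarith
  filter_upwards [eventually_lt_of_lt_liminf hb hbdd, Ioo_mem_nhdsGT one_pos] with δ hδb hδ p hp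
  have hfin : (⨆ x ∈ measSupport μ, μ (closedBall x δ)) ≠ ⊤ :=
    ne_top_of_le_ne_top (measure_ne_top μ univ) (iSup₂_le fun _ _ => measure_mono (subset_univ _))
  calc μ (closedBall p δ) ≤ ⨆ x ∈ measSupport μ, μ (closedBall x δ) :=
        le_biSup (fun x => μ (closedBall x δ)) hp
    _ = ENNReal.ofReal (⨆ x ∈ measSupport μ, μ (closedBall x δ)).toReal :=
        (ENNReal.ofReal_toReal hfin).symm
    _ ≤ ENNReal.ofReal (δ ^ b) :=
        ENNReal.ofReal_le_ofReal (le_rpow_of_le_log_div_log ENNReal.toReal_nonneg hδ hδb.le)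

lemma exists_measure_closedBall_le_rpow {μ : Measure (EuclideanSpace ℝ (Fin 2))}
    [IsFiniteMeasure μ] (hdim : 0 < lowerLinftyDim μ) :
    ∃ s C δ₀ : ℝ, 0 < s ∧ 0 < δ₀ ∧
      ∀ x, ∀ δ ∈ Ioc 0 δ₀, μ (closedBall x δ) ≤ ENNReal.ofReal (C * δ ^ s) := by
  obtain ⟨s, hs0, hs⟩ := exists_between hdim
  obtain ⟨δ₁, hδ₁, hδ₁s⟩ :=
    mem_nhdsGT_iff_exists_Ioc_subset.1 (eventually_measure_closedBall_le_rpow hs0.le hs)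
  refine ⟨s, 2 ^ s, δ₁ / 2, hs0, half_pos hδ₁, fun x δ hδ => ?_⟩
  refine measure_closedBall_le_of_forall_mem_measSupport (fun p hp => ?_) x
  rw [← mul_rpow zero_le_two hδ.1.le]
  exact hδ₁s ⟨by linarith [hδ.1], by linarith [hδ.2]⟩ p hp

lemma le_mul_exp_neg_of_le_posLog {d ε a : ℝ} (hd : 0 ≤ d) (hε : 0 < ε) (ha : 0 < a)
    (h : a ≤ log⁺ (ε / d)) : d ≤ ε * exp (-a) := by
  have hlog : 0 < log (ε / d) := by
    simpa [posLog_apply] using ha.trans_le h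
  have hd : 0 < d := hd.lt_of_ne (by rintro rfl; simp at hlog)
  have hexp : exp a ≤ ε / d := by
    rw [← exp_log (div_pos hε hd)]
    exact exp_le_exp.2 (h.trans_eq (max_eq_right hlog.le))
  rw [exp_neg, ← div_eq_mul_inv, le_div_iff₀ (exp_pos a)]
  rw [le_div_iff₀ hd] at hexp
  linarith

lemma tendsto_ofReal_mul_rpow_nhdsGT_zero {s : ℝ} (hs : 0 < s) (C : ℝ) :
    Tendsto (fun δ : ℝ => ENNReal.ofReal (C * δ ^ s)) (𝓝[>] 0) (𝓝 0) := by
  have hcont : ContinuousAt (fun δ : ℝ => ENNReal.ofReal (C * δ ^ s)) 0 :=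
    ENNReal.continuous_ofReal.continuousAt.comp
      (continuousAt_const.mul (continuousAt_rpow_const 0 s (Or.inr hs.le)))
  simpa [zero_rpow hs.ne'] using hcont.tendsto.mono_left nhdsWithin_le_nhds

lemma lintegral_exp_neg_mul_sqrt_ne_top {s : ℝ} (hs : 0 < s) :
    ∫⁻ t in Ioi 0, ENNReal.ofReal (exp (-s * √t)) ≠ ⊤ := by
  have hint := integrableOn_rpow_mul_exp_neg_mul_rpow (s := 0) (p := 1 / 2) (by norm_num)
    (by norm_num) hs
  refine (Integrable.lintegral_lt_top (hint.congr_fun (fun t ht => ?_) measurableSet_Ioi)).ne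
  dsimp only
  rw [rpow_zero, one_mul, sqrt_eq_rpow]

section BallDecay

variable {X : Type*} [PseudoMetricSpace X] [MeasurableSpace X] {μ : Measure X} {s C δ₀ : ℝ}

lemma measure_singleton_eq_zero_of_measure_closedBall_le (hs : 0 < s) (hδ₀ : 0 < δ₀)
    (hμ : ∀ x, ∀ δ ∈ Ioc 0 δ₀, μ (closedBall x δ) ≤ ENNReal.ofReal (C * δ ^ s)) (x : X) :
    μ {x} = 0 := by
  refine le_antisymm (ge_of_tendsto (tendsto_ofReal_mul_rpow_nhdsGT_zero hs C) ?_) zero_le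
  filter_upwards [Ioc_mem_nhdsGT hδ₀] with δ hδ
  exact (measure_mono (singleton_subset_iff.2 (mem_closedBall_self hδ.1.le))).trans (hμ x δ hδ)

variable [OpensMeasurableSpace X]

lemma lintegral_posLog_div_dist_sq_le
    (hμ : ∀ x, ∀ δ ∈ Ioc 0 δ₀, μ (closedBall x δ) ≤ ENNReal.ofReal (C * δ ^ s))
    {ε : ℝ} (hε : ε ∈ Ioc 0 δ₀) (x : X) :
    ∫⁻ y, ENNReal.ofReal (log⁺ (ε / dist x y) ^ 2) ∂μ ≤
      ENNReal.ofReal (C * ε ^ s) * ∫⁻ t in Ioi 0, ENNReal.ofReal (exp (-s * √t)) := by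
  rw [lintegral_eq_lintegral_meas_le μ (ae_of_all _ fun _ => sq_nonneg _) (by fun_prop),
    ← lintegral_const_mul' _ _ ENNReal.ofReal_ne_top]
  refine setLIntegral_mono' measurableSet_Ioi fun t ht => ?_
  have hr : ε * exp (-√t) ∈ Ioc 0 δ₀ :=
    ⟨mul_pos hε.1 (exp_pos _),
      (mul_le_of_le_one_right hε.1.le (exp_le_one_iff.2 (by simp))).trans hε.2⟩
  have hsub : {y | t ≤ log⁺ (ε / dist x y) ^ 2} ⊆ closedBall x (ε * exp (-√t)) := by
    intro y hy
    rw [mem_closedBall, dist_comm]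
    refine le_mul_exp_neg_of_le_posLog dist_nonneg hε.1 (sqrt_pos.2 ht) ?_
    simpa [sqrt_sq posLog_nonneg] using sqrt_le_sqrt hy
  calc μ {y | t ≤ log⁺ (ε / dist x y) ^ 2}
    _ ≤ μ (closedBall x (ε * exp (-√t))) := measure_mono hsub
    _ ≤ ENNReal.ofReal (C * (ε * exp (-√t)) ^ s) := hμ x _ hr
    _ = ENNReal.ofReal (C * ε ^ s) * ENNReal.ofReal (exp (-s * √t)) := by
      rw [← ENNReal.ofReal_mul' (exp_pos _).le, mul_rpow hε.1.le (exp_pos _).le, ← exp_mul]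
      ring_nf

lemma tendsto_iSup_eLpNorm_posLog_div_dist (hs : 0 < s) (hδ₀ : 0 < δ₀)
    (hμ : ∀ x, ∀ δ ∈ Ioc 0 δ₀, μ (closedBall x δ) ≤ ENNReal.ofReal (C * δ ^ s)) :
    Tendsto (fun ε => ⨆ x, eLpNorm (fun y => log⁺ (ε / dist x y)) 2 μ) (𝓝[>] 0) (𝓝 0) := by
  set I := ∫⁻ t in Ioi 0, ENNReal.ofReal (exp (-s * √t))
  have hbound : ∀ᶠ ε in 𝓝[>] 0, ⨆ x, eLpNorm (fun y => log⁺ (ε / dist x y)) 2 μ ≤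
      (ENNReal.ofReal (C * ε ^ s) * I) ^ (1 / 2 : ℝ) := by
    filter_upwards [Ioc_mem_nhdsGT hδ₀] with ε hε
    refine iSup_le fun x => ?_
    rw [eLpNorm_eq_lintegral_rpow_enorm_toReal two_ne_zero ENNReal.ofNat_ne_top,
      ENNReal.toReal_ofNat]
    gcongr
    refine le_trans (le_of_eq (lintegral_congr fun y => ?_))
      (lintegral_posLog_div_dist_sq_le hμ hε x)
    rw [Real.enorm_of_nonneg posLog_nonneg,
      ENNReal.ofReal_rpow_of_nonneg posLog_nonneg zero_le_two, rpow_two]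
  have hlim :
      Tendsto (fun ε => (ENNReal.ofReal (C * ε ^ s) * I) ^ (1 / 2 : ℝ)) (𝓝[>] 0) (𝓝 0) := by
    have := (ENNReal.continuous_rpow_const (y := 1 / 2)).tendsto _ |>.comp
      (ENNReal.Tendsto.mul_const (tendsto_ofReal_mul_rpow_nhdsGT_zero hs C)
        (Or.inr (lintegral_exp_neg_mul_sqrt_ne_top hs)))
    rwa [zero_mul, ENNReal.zero_rpow_of_pos (by norm_num)] at this
  exact tendsto_of_tendsto_of_tendsto_of_le_of_le' tendsto_const_nhds hlim
    (Eventually.of_forall fun _ => zero_le) hbound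

end BallDecay

lemma enorm_integral_mul_le_eLpNorm_mul_eLpNorm {α : Type*} [MeasurableSpace α] {ν : Measure α}
    {g f : α → ℝ} (hg : AEStronglyMeasurable g ν) (hf : AEStronglyMeasurable f ν) :
    ‖∫ y, g y * f y ∂ν‖ₑ ≤ eLpNorm g 2 ν * eLpNorm f 2 ν :=
  calc ‖∫ y, g y * f y ∂ν‖ₑ ≤ ∫⁻ y, ‖g y * f y‖ₑ ∂ν := enorm_integral_le_lintegral_enorm _
    _ = eLpNorm (g • f) 1 ν := eLpNorm_one_eq_lintegral_enorm.symm
    _ ≤ eLpNorm g 2 ν * eLpNorm f 2 ν := eLpNorm_smul_le_mul_eLpNorm hf hg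

section KernelOperator

variable {X Y : Type*} [TopologicalSpace X] [TopologicalSpace Y] [MeasurableSpace Y]
  [OpensMeasurableSpace Y] {ν : Measure Y} {f : Y → ℝ} {t : Set Y} {M : ℝ}

lemma IntegrableOn.mul_of_continuousOn_of_abs_le {g : Y → ℝ} (ht : MeasurableSet t)
    (hg : ContinuousOn g t) (hM : ∀ y ∈ t, |g y| ≤ M) (hf : IntegrableOn f t ν) :
    IntegrableOn (fun y => g y * f y) t ν :=
  hf.bdd_mul (hg.aestronglyMeasurable ht) ((ae_restrict_mem ht).mono hM)

lemma continuousOn_setIntegral_mul_of_continuousOn_prod [FirstCountableTopology X]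
    {K : X → Y → ℝ} {s : Set X}
    (ht : MeasurableSet t) (hK : ContinuousOn (uncurry K) (s ×ˢ t))
    (hM : ∀ x ∈ s, ∀ y ∈ t, |K x y| ≤ M) (hf : IntegrableOn f t ν) :
    ContinuousOn (fun x => ∫ y in t, K x y * f y ∂ν) s := by
  refine continuousOn_of_dominated (bound := fun y => M * |f y|)
    (fun x hx => ((hK.uncurry_left x hx).aestronglyMeasurable ht).mul hf.aestronglyMeasurable)
    (fun x hx => ?_) (hf.abs.const_mul M) ?_
  · filter_upwards [ae_restrict_mem ht] with y hy
    rw [norm_mul, Real.norm_eq_abs, Real.norm_eq_abs]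
    exact mul_le_mul_of_nonneg_right (hM x hx y hy) (abs_nonneg _)
  · filter_upwards [ae_restrict_mem ht] with y hy
    exact (hK.uncurry_right y hy).mul continuousOn_const

end KernelOperator

section Green

variable {X : Type*} [MetricSpace X]

noncomputable def truncGreen (h : X → X → ℝ) (ε : ℝ) (x y : X) : ℝ :=
  -(1 / (2 * π)) * log (max (dist x y) ε) + h x y

lemma continuousOn_uncurry_truncGreen {h : X → X → ℝ} {S : Set (X × X)}
    (hh : ContinuousOn (uncurry h) S) {ε : ℝ} (hε : 0 < ε) :
    ContinuousOn (uncurry (truncGreen h ε)) S :=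
  ((continuous_const.mul ((continuous_dist.max continuous_const).log
    fun _ => (lt_max_of_lt_right hε).ne')).continuousOn).add hh

lemma exists_abs_truncGreen_le [ProperSpace X] {h : X → X → ℝ} {Ω : Set X}
    (hΩ : Bornology.IsBounded Ω) (hh : ContinuousOn (uncurry h) (closure Ω ×ˢ closure Ω))
    {ε : ℝ} (hε : 0 < ε) : ∃ M, ∀ x ∈ Ω, ∀ y ∈ Ω, |truncGreen h ε x y| ≤ M := by
  obtain ⟨M, hM⟩ := (hΩ.isCompact_closure.prod hΩ.isCompact_closure).exists_bound_of_continuousOn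
    (continuousOn_uncurry_truncGreen hh hε)
  exact ⟨M, fun x hx y hy => hM (x, y) ⟨subset_closure hx, subset_closure hy⟩⟩

variable [MeasurableSpace X] {ν : Measure X} {h G : X → X → ℝ} {f : X → ℝ}

lemma integral_green_mul_eq_add
    (hG : ∀ x y, x ≠ y → G x y = -(1 / (2 * π)) * log (dist x y) + h x y)
    {ε : ℝ} (hε : 0 < ε) {x : X} (hx : ν {x} = 0)
    (htrunc : Integrable (fun y => truncGreen h ε x y * f y) ν)
    (htail : Integrable (fun y => log⁺ (ε / dist x y) * f y) ν) :
    ∫ y, G x y * f y ∂ν =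
      ∫ y, truncGreen h ε x y * f y ∂ν + 1 / (2 * π) * ∫ y, log⁺ (ε / dist x y) * f y ∂ν := by
  rw [← integral_const_mul, ← integral_add htrunc (htail.const_mul _)]
  refine integral_congr_ae ?_
  filter_upwards [measure_eq_zero_iff_ae_notMem.1 hx] with y hy
  rw [hG x y (Ne.symm hy), truncGreen,
    log_eq_log_max_sub_posLog_div (dist_pos.2 (Ne.symm hy)) hε]
  ring

lemma tendstoUniformlyOn_integral_truncGreen [OpensMeasurableSpace X] {s C δ₀ : ℝ}
    (hs : 0 < s) (hδ₀ : 0 < δ₀)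
    (hν : ∀ x, ∀ δ ∈ Ioc 0 δ₀, ν (closedBall x δ) ≤ ENNReal.ofReal (C * δ ^ s))
    (hG : ∀ x y, x ≠ y → G x y = -(1 / (2 * π)) * log (dist x y) + h x y)
    (hf : MemLp f 2 ν) {Ω : Set X}
    (htrunc : ∀ ε > 0, ∀ x ∈ Ω, Integrable (fun y => truncGreen h ε x y * f y) ν) :
    TendstoUniformlyOn (fun ε x => ∫ y, truncGreen h ε x y * f y ∂ν)
      (fun x => ∫ y, G x y * f y ∂ν) (𝓝[>] 0) Ω := by
  have htail := tendsto_iSup_eLpNorm_posLog_div_dist hs hδ₀ hν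
  have hbound : Tendsto (fun ε => ENNReal.ofReal (1 / (2 * π)) *
      (⨆ x, eLpNorm (fun y => log⁺ (ε / dist x y)) 2 ν) * eLpNorm f 2 ν) (𝓝[>] 0) (𝓝 0) := by
    simpa using ENNReal.Tendsto.mul_const
      (ENNReal.Tendsto.const_mul htail (Or.inr ENNReal.ofReal_ne_top)) (Or.inr hf.2.ne)
  rw [EMetric.tendstoUniformlyOn_iff]
  intro η hη
  filter_upwards [self_mem_nhdsWithin, htail (Iio_mem_nhds one_pos), hbound (Iio_mem_nhds hη)]
    with ε hε htail_lt_one hbound_lt x hx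
  have hnorm_le := le_iSup (fun x => eLpNorm (fun y => log⁺ (ε / dist x y)) 2 ν) x
  have hmem : MemLp (fun y => log⁺ (ε / dist x y)) 2 ν :=
    ⟨(by fun_prop : Measurable _).aestronglyMeasurable,
      (hnorm_le.trans_lt htail_lt_one).trans ENNReal.one_lt_top⟩
  rw [integral_green_mul_eq_add hG hε
      (measure_singleton_eq_zero_of_measure_closedBall_le hs hδ₀ hν x)
      (htrunc ε hε x hx) (hmem.integrable_mul hf),
    edist_eq_enorm_sub, add_sub_cancel_left, enorm_mul, Real.enorm_of_nonneg (by positivity)]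
  refine lt_of_le_of_lt ?_ hbound_lt
  dsimp only
  rw [mul_assoc]
  gcongr
  exact (enorm_integral_mul_le_eLpNorm_mul_eLpNorm hmem.1 hf.1).trans (by gcongr)

end Green

theorem green_operator_continuousOn_general
    (Ω : Set (EuclideanSpace ℝ (Fin 2)))
    (hΩo : IsOpen Ω) (hΩb : Bornology.IsBounded Ω)
    (μ : Measure (EuclideanSpace ℝ (Fin 2))) [IsFiniteMeasure μ]
    (hdim : 0 < lowerLinftyDim μ)
    (h : EuclideanSpace ℝ (Fin 2) → EuclideanSpace ℝ (Fin 2) → ℝ)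
    (hh : ContinuousOn (fun p : EuclideanSpace ℝ (Fin 2) × EuclideanSpace ℝ (Fin 2) =>
      h p.1 p.2) (closure Ω ×ˢ closure Ω))
    (G : EuclideanSpace ℝ (Fin 2) → EuclideanSpace ℝ (Fin 2) → ℝ)
    (hG : ∀ x y, x ≠ y → G x y = -(1 / (2 * Real.pi)) * Real.log (dist x y) + h x y)
    (f : EuclideanSpace ℝ (Fin 2) → ℝ) (hf : MemLp f 2 (μ.restrict Ω)) :
    ContinuousOn (fun x => ∫ y in Ω, G x y * f y ∂μ) Ω := by
  obtain ⟨s, C, δ₀, hs, hδ₀, hμ⟩ := exists_measure_closedBall_le_rpow hdim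
  have hν : ∀ x, ∀ δ ∈ Ioc 0 δ₀, μ.restrict Ω (closedBall x δ) ≤ ENNReal.ofReal (C * δ ^ s) :=
    fun x δ hδ => (Measure.restrict_apply_le _ _).trans (hμ x δ hδ)
  have hfΩ : IntegrableOn f Ω μ := hf.integrable one_le_two
  have hK : ∀ ε > 0, ContinuousOn (uncurry (truncGreen h ε)) (Ω ×ˢ Ω) := fun ε hε =>
    (continuousOn_uncurry_truncGreen hh hε).mono (prod_mono subset_closure subset_closure)
  have htrunc : ∀ ε > 0, ∀ x ∈ Ω, IntegrableOn (fun y => truncGreen h ε x y * f y) Ω μ := by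
    intro ε hε x hx
    obtain ⟨M, hM⟩ := exists_abs_truncGreen_le hΩb hh hε
    exact IntegrableOn.mul_of_continuousOn_of_abs_le hΩo.measurableSet
      ((hK ε hε).uncurry_left x hx) (hM x hx) hfΩ
  refine (tendstoUniformlyOn_integral_truncGreen hs hδ₀ hν hG hf htrunc).continuousOn
    (eventually_mem_nhdsWithin.mono fun ε hε => ?_).frequently
  obtain ⟨M, hM⟩ := exists_abs_truncGreen_le hΩb hh hε
  exact continuousOn_setIntegral_mul_of_continuousOn_prod hΩo.measurableSet (hK ε hε) hM hfΩ

/-- Interior continuity of the Green operator for d = 2. -/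
theorem green_operator_continuousOn
    (Ω : Set (EuclideanSpace ℝ (Fin 2)))
    (hΩo : IsOpen Ω) (hΩconn : IsConnected Ω) (hΩb : Bornology.IsBounded Ω)
    (μ : Measure (EuclideanSpace ℝ (Fin 2))) [IsFiniteMeasure μ]
    (hsupp : μ (closure Ω)ᶜ = 0) (hμΩ : 0 < μ Ω)
    (hdim : 0 < lowerLinftyDim μ)
    (h : EuclideanSpace ℝ (Fin 2) → EuclideanSpace ℝ (Fin 2) → ℝ)
    (hh : ContinuousOn (fun p : EuclideanSpace ℝ (Fin 2) × EuclideanSpace ℝ (Fin 2) =>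
      h p.1 p.2) (closure Ω ×ˢ closure Ω))
    (G : EuclideanSpace ℝ (Fin 2) → EuclideanSpace ℝ (Fin 2) → ℝ)
    (hG : ∀ x y, x ≠ y → G x y = -(1 / (2 * Real.pi)) * Real.log (dist x y) + h x y)
    (f : EuclideanSpace ℝ (Fin 2) → ℝ) (hf : MemLp f 2 (μ.restrict Ω)) :
    ContinuousOn (fun x => ∫ y in Ω, G x y * f y ∂μ) Ω :=
  green_operator_continuousOn_general Ω hΩo hΩb μ hdim h hh G hG f hf
end

section
/- Example 6.4 (weak eigenfunction with a sign change for a singular measure): Let Ω = (−2,2) × (−1,1) ⊂ ℝ² and define u(x,y) = 1 + |(x+1)y| − |x+1| − |y| for x ≤ 0 and u(x,y) = −1 − |(x−1)y| + |x−1| + |y| for x > 0 (the two formulas agree, both vanishing, at x = 0). Then for every smooth function φ : ℝ² → ℝ with compact support contained in Ω, −∫∫_Ω u(x,y) Δφ(x,y) dx dy = 2 [ ∫_{−2}^{2} u(x,0) φ(x,0) dx + ∫_{−1}^{1} u(−1,y) φ(−1,y) dy + ∫_{−1}^{1} u(1,y) φ(1,y) dy ], where Δφ = ∂²φ/∂x²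 + ∂²φ/∂y² and dx dy is two-dimensional Lebesgue measure. (This states that u is a weak eigenfunction with eigenvalue 2 of −Δ_μ for μ = μ₀ + μ₁ + μ₂, the sum of one-dimensional Lebesgue measures on [−2,2]×{0}, {−1}×[−1,1] and {1}×[−1,1].) -/
open MeasureTheory Set

/-- The classical Laplacian `Δφ = ∂²φ/∂x² + ∂²φ/∂y²` of `φ : ℝ × ℝ → ℝ`. -/
noncomputable def lap2 (φ : ℝ × ℝ → ℝ) (p : ℝ × ℝ) : ℝ :=
  deriv (fun x => deriv (fun x' => φ (x', p.2)) x) p.1 +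
    deriv (fun y => deriv (fun y' => φ (p.1, y')) y) p.2

/-- The eigenfunction of Example 6.4 on `(−2,2) × (−1,1)`. -/
noncomputable def uEx64 (p : ℝ × ℝ) : ℝ :=
  if p.1 ≤ 0 then 1 + |(p.1 + 1) * p.2| - |p.1 + 1| - |p.2|
  else -1 - |(p.1 - 1) * p.2| + |p.1 - 1| + |p.2|

/- ### Auxiliary material -/

noncomputable def Afn (x : ℝ) : ℝ := if x ≤ 0 then 1 - |x + 1| else |x - 1| - 1

noncomputable def Bfn (y : ℝ) : ℝ := 1 - |y|

lemma uEx64_eq (x y : ℝ) : uEx64 (x, y) = Afn x * Bfn y := by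
  simp only [uEx64, Afn, Bfn]
  split_ifs <;> (rw [abs_mul]; ring)

lemma Afn_cont : Continuous Afn := by
  have h1 : Continuous fun x : ℝ => 1 - |x + 1| := by continuity
  have h2 : Continuous fun x : ℝ => |x - 1| - 1 := by continuity
  refine h1.if_le h2 continuous_id continuous_const fun x hx => ?_
  change x = 0 at hx
  subst hx; norm_num

lemma Bfn_cont : Continuous Bfn := by unfold Bfn; continuity

noncomputable def pdx (g : ℝ × ℝ → ℝ) : ℝ × ℝ → ℝ := fun p => fderiv ℝ g p (1, 0)
noncomputable def pdy (g : ℝ × ℝ → ℝ) : ℝ × ℝ → ℝ := fun p => fderiv ℝ g p (0, 1)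

lemma pdx_contDiff {g : ℝ × ℝ → ℝ} (hg : ContDiff ℝ (⊤ : ℕ∞) g) : ContDiff ℝ (⊤ : ℕ∞) (pdx g) :=
  (hg.fderiv_right (by simp)).clm_apply contDiff_const

lemma pdy_contDiff {g : ℝ × ℝ → ℝ} (hg : ContDiff ℝ (⊤ : ℕ∞) g) : ContDiff ℝ (⊤ : ℕ∞) (pdy g) :=
  (hg.fderiv_right (by simp)).clm_apply contDiff_const

lemma deriv_slice_x {g : ℝ × ℝ → ℝ} (hg : ContDiff ℝ (⊤ : ℕ∞) g) (a b : ℝ) :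
    deriv (fun x => g (x, b)) a = pdx g (a, b) := by
  have hc : HasDerivAt (fun x : ℝ => (x, b)) ((1 : ℝ), (0 : ℝ)) a :=
    HasDerivAt.prodMk (hasDerivAt_id a) (hasDerivAt_const a b)
  exact (((hg.differentiable (by simp)) (a, b)).hasFDerivAt.comp_hasDerivAt a hc).deriv

lemma deriv_slice_y {g : ℝ × ℝ → ℝ} (hg : ContDiff ℝ (⊤ : ℕ∞) g) (a b : ℝ) :
    deriv (fun y => g (a, y)) b = pdy g (a, b) := by
  have hc : HasDerivAt (fun y : ℝ => (a, y)) ((0 : ℝ), (1 : ℝ)) b :=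
    HasDerivAt.prodMk (hasDerivAt_const b a) (hasDerivAt_id b)
  exact (((hg.differentiable (by simp)) (a, b)).hasFDerivAt.comp_hasDerivAt b hc).deriv

lemma slice_x_contDiff {g : ℝ × ℝ → ℝ} (hg : ContDiff ℝ (⊤ : ℕ∞) g) (b : ℝ) :
    ContDiff ℝ (⊤ : ℕ∞) (fun x => g (x, b)) :=
  hg.comp (ContDiff.prodMk contDiff_id contDiff_const)

lemma slice_y_contDiff {g : ℝ × ℝ → ℝ} (hg : ContDiff ℝ (⊤ : ℕ∞) g) (a : ℝ) :
    ContDiff ℝ (⊤ : ℕ∞) (fun y => g (a, y)) :=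
  hg.comp (ContDiff.prodMk contDiff_const contDiff_id)

lemma dd_slice_x {g : ℝ × ℝ → ℝ} (hg : ContDiff ℝ (⊤ : ℕ∞) g) (a b : ℝ) :
    deriv (deriv (fun x => g (x, b))) a = pdx (pdx g) (a, b) := by
  have h1 : deriv (fun x => g (x, b)) = fun x => pdx g (x, b) :=
    funext fun x => deriv_slice_x hg x b
  rw [h1, deriv_slice_x (pdx_contDiff hg)]

lemma dd_slice_y {g : ℝ × ℝ → ℝ} (hg : ContDiff ℝ (⊤ : ℕ∞) g) (a b : ℝ) :
    deriv (deriv (fun y => g (a, y))) b = pdy (pdy g) (a, b) := by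
  have h1 : deriv (fun y => g (a, y)) = fun y => pdy g (a, y) :=
    funext fun y => deriv_slice_y hg a y
  rw [h1, deriv_slice_y (pdy_contDiff hg)]

lemma lap2_eq {φ : ℝ × ℝ → ℝ} (hφ : ContDiff ℝ (⊤ : ℕ∞) φ) (p : ℝ × ℝ) :
    lap2 φ p = pdx (pdx φ) p + pdy (pdy φ) p := by
  have h1 : (fun x => deriv (fun x' => φ (x', p.2)) x) = deriv (fun x => φ (x, p.2)) := rfl
  have h2 : (fun y => deriv (fun y' => φ (p.1, y')) y) = deriv (fun y => φ (p.1, y)) := rfl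
  rw [lap2, h1, h2, dd_slice_x hφ, dd_slice_y hφ]

/-- Integration by parts against a linear weight. -/
lemma ibp_linear (ψ : ℝ → ℝ) (hψ : ContDiff ℝ (⊤ : ℕ∞) ψ) (α β c d : ℝ) :
    ∫ x in c..d, (α * x + β) * deriv (deriv ψ) x
      = (α * d + β) * deriv ψ d - (α * c + β) * deriv ψ c - α * (ψ d - ψ c) := by
  have hpsiI : ContDiff ℝ (⊤ : ℕ∞) ψ := hψ.of_le (by simp)
  have hψ' : ContDiff ℝ (⊤ : ℕ∞) (deriv ψ) := (contDiff_infty_iff_deriv.mp hpsiI).2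
  have hdd : Continuous (deriv (deriv ψ)) := hψ'.continuous_deriv (by exact_mod_cast le_top)
  have h1 : ∀ x ∈ Set.uIcc c d, HasDerivAt (fun t => α * t + β) α x := fun x _ => by
    simpa using ((hasDerivAt_id x).const_mul α).add_const β
  have h2 : ∀ x ∈ Set.uIcc c d, HasDerivAt (deriv ψ) (deriv (deriv ψ) x) x := fun x _ =>
    ((hψ'.differentiable (by simp)) x).hasDerivAt
  rw [intervalIntegral.integral_mul_deriv_eq_deriv_mul h1 h2
      (intervalIntegrable_const) (hdd.intervalIntegrable c d)]
  have h3 : ∫ x in c..d, α * deriv ψ x = α * (ψ d - ψ c) := by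
    rw [intervalIntegral.integral_const_mul,
      intervalIntegral.integral_deriv_eq_sub (fun x _ => (hψ.differentiable (by simp)) x)
        ((hψ'.continuous).intervalIntegrable c d)]
  rw [h3]

/-- y-direction integration by parts. -/
lemma ibp_B (ψ : ℝ → ℝ) (hψ : ContDiff ℝ (⊤ : ℕ∞) ψ) (hm : ψ (-1) = 0) (hp : ψ 1 = 0) :
    ∫ y in Ioo (-1 : ℝ) 1, Bfn y * deriv (deriv ψ) y = -(2 * ψ 0) := by
  have hpsiI : ContDiff ℝ (⊤ : ℕ∞) ψ := hψ.of_le (by simp)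
  have hψ' : ContDiff ℝ (⊤ : ℕ∞) (deriv ψ) := (contDiff_infty_iff_deriv.mp hpsiI).2
  have hdd : Continuous (deriv (deriv ψ)) := hψ'.continuous_deriv (by exact_mod_cast le_top)
  have hc : Continuous fun y => Bfn y * deriv (deriv ψ) y := Bfn_cont.mul hdd
  rw [← integral_Ioc_eq_integral_Ioo, ← intervalIntegral.integral_of_le (by norm_num : (-1:ℝ) ≤ 1)]
  rw [← intervalIntegral.integral_add_adjacent_intervals
      (hc.intervalIntegrable (-1) 0) (hc.intervalIntegrable 0 1)]
  have e1 : ∫ y in (-1 : ℝ)..0, Bfn y * deriv (deriv ψ) y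
      = ∫ y in (-1 : ℝ)..0, ((1:ℝ) * y + 1) * deriv (deriv ψ) y := by
    refine intervalIntegral.integral_congr fun y hy => ?_
    rw [uIcc_of_le (by norm_num : (-1:ℝ) ≤ 0)] at hy
    rw [Bfn, abs_of_nonpos hy.2]; ring
  have e2 : ∫ y in (0 : ℝ)..1, Bfn y * deriv (deriv ψ) y
      = ∫ y in (0 : ℝ)..1, ((-1:ℝ) * y + 1) * deriv (deriv ψ) y := by
    refine intervalIntegral.integral_congr fun y hy => ?_
    rw [uIcc_of_le (by norm_num : (0:ℝ) ≤ 1)] at hy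
    rw [Bfn, abs_of_nonneg hy.1]; ring
  rw [e1, e2, ibp_linear ψ hψ, ibp_linear ψ hψ, hm, hp]
  ring

/-- x-direction integration by parts. -/
lemma ibp_A (ψ : ℝ → ℝ) (hψ : ContDiff ℝ (⊤ : ℕ∞) ψ) (hm : ψ (-2) = 0) (hp : ψ 2 = 0) :
    ∫ x in Ioo (-2 : ℝ) 2, Afn x * deriv (deriv ψ) x = 2 * ψ 1 - 2 * ψ (-1) := by
  have hpsiI : ContDiff ℝ (⊤ : ℕ∞) ψ := hψ.of_le (by simp)
  have hψ' : ContDiff ℝ (⊤ : ℕ∞) (deriv ψ) := (contDiff_infty_iff_deriv.mp hpsiI).2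
  have hdd : Continuous (deriv (deriv ψ)) := hψ'.continuous_deriv (by exact_mod_cast le_top)
  have hc : Continuous fun x => Afn x * deriv (deriv ψ) x := Afn_cont.mul hdd
  rw [← integral_Ioc_eq_integral_Ioo, ← intervalIntegral.integral_of_le (by norm_num : (-2:ℝ) ≤ 2)]
  rw [← intervalIntegral.integral_add_adjacent_intervals
      (hc.intervalIntegrable (-2) 1) (hc.intervalIntegrable 1 2),
    ← intervalIntegral.integral_add_adjacent_intervals
      (hc.intervalIntegrable (-2) (-1)) (hc.intervalIntegrable (-1) 1)]
  have e1 : ∫ x in (-2 : ℝ)..(-1), Afn x * deriv (deriv ψ) x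
      = ∫ x in (-2 : ℝ)..(-1), ((1:ℝ) * x + 2) * deriv (deriv ψ) x := by
    refine intervalIntegral.integral_congr fun x hx => ?_
    rw [uIcc_of_le (by norm_num : (-2:ℝ) ≤ -1)] at hx
    rw [Afn, if_pos (by linarith [hx.2] : x ≤ 0), abs_of_nonpos (by linarith [hx.2] : x + 1 ≤ 0)]
    ring
  have e2 : ∫ x in (-1 : ℝ)..1, Afn x * deriv (deriv ψ) x
      = ∫ x in (-1 : ℝ)..1, ((-1:ℝ) * x + 0) * deriv (deriv ψ) x := by
    refine intervalIntegral.integral_congr fun x hx => ?_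
    rw [uIcc_of_le (by norm_num : (-1:ℝ) ≤ 1)] at hx
    rcases le_or_gt x 0 with h | h
    · rw [Afn, if_pos h, abs_of_nonneg (by linarith [hx.1] : (0:ℝ) ≤ x + 1)]; ring
    · rw [Afn, if_neg (by linarith : ¬ x ≤ 0),
        abs_of_nonpos (by linarith [hx.2] : x - 1 ≤ 0)]; ring
  have e3 : ∫ x in (1 : ℝ)..2, Afn x * deriv (deriv ψ) x
      = ∫ x in (1 : ℝ)..2, ((1:ℝ) * x + (-2)) * deriv (deriv ψ) x := by
    refine intervalIntegral.integral_congr fun x hx => ?_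
    rw [uIcc_of_le (by norm_num : (1:ℝ) ≤ 2)] at hx
    rw [Afn, if_neg (by linarith [hx.1] : ¬ x ≤ 0),
      abs_of_nonneg (by linarith [hx.1] : (0:ℝ) ≤ x - 1)]
    ring
  rw [e1, e2, e3, ibp_linear ψ hψ, ibp_linear ψ hψ, ibp_linear ψ hψ, hm, hp]
  ring

lemma setIntegral_prod_symm' (f : ℝ × ℝ → ℝ) (s t : Set ℝ)
    (hf : IntegrableOn f (s ×ˢ t)) :
    ∫ z in s ×ˢ t, f z = ∫ y in t, ∫ x in s, f (x, y) := by
  have hf' : Integrable f ((volume.restrict s).prod (volume.restrict t)) := by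
    rw [Measure.prod_restrict]
    rw [Measure.volume_eq_prod] at hf
    exact hf
  have h2 := integral_prod_symm f hf'
  rw [Measure.prod_restrict, ← Measure.volume_eq_prod] at h2
  exact h2

lemma uEx64_cont : Continuous uEx64 := by
  have : uEx64 = fun p : ℝ × ℝ => Afn p.1 * Bfn p.2 := funext fun p => uEx64_eq p.1 p.2
  rw [this]
  exact (Afn_cont.comp continuous_fst).mul (Bfn_cont.comp continuous_snd)

/-- Example 6.4: weak eigenfunction with a sign change for a singular measure. -/
theorem example_sign_change_weak_eigenfunction
    (φ : ℝ × ℝ → ℝ) (hφ : ContDiff ℝ (⊤ : ℕ∞) φ) (hφc : HasCompactSupport φ)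
    (hφsupp : tsupport φ ⊆ Ioo (-2 : ℝ) 2 ×ˢ Ioo (-1 : ℝ) 1) :
    -(∫ p in Ioo (-2 : ℝ) 2 ×ˢ Ioo (-1 : ℝ) 1, uEx64 p * lap2 φ p) =
      2 * ((∫ x in (-2 : ℝ)..2, uEx64 (x, 0) * φ (x, 0)) +
        (∫ y in (-1 : ℝ)..1, uEx64 (-1, y) * φ (-1, y)) +
        ∫ y in (-1 : ℝ)..1, uEx64 (1, y) * φ (1, y)) := by
  have hz : ∀ p : ℝ × ℝ, p ∉ Ioo (-2 : ℝ) 2 ×ˢ Ioo (-1 : ℝ) 1 → φ p = 0 := fun p hp =>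
    image_eq_zero_of_notMem_tsupport fun h => hp (hφsupp h)
  have hzx : ∀ x : ℝ, φ (x, -1) = 0 := fun x =>
    hz _ (by simp [Set.mem_prod])
  have hzx' : ∀ x : ℝ, φ (x, 1) = 0 := fun x =>
    hz _ (by simp [Set.mem_prod])
  have hzy : ∀ y : ℝ, φ (-2, y) = 0 := fun y =>
    hz _ (by simp [Set.mem_prod])
  have hzy' : ∀ y : ℝ, φ (2, y) = 0 := fun y =>
    hz _ (by simp [Set.mem_prod])
  -- continuity of the pieces
  have hxxc : Continuous (pdx (pdx φ)) := (pdx_contDiff (pdx_contDiff hφ)).continuous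
  have hyyc : Continuous (pdy (pdy φ)) := (pdy_contDiff (pdy_contDiff hφ)).continuous
  have hK : IsCompact (Icc (-2 : ℝ) 2 ×ˢ Icc (-1 : ℝ) 1) := isCompact_Icc.prod isCompact_Icc
  have hsub : Ioo (-2 : ℝ) 2 ×ˢ Ioo (-1 : ℝ) 1 ⊆ Icc (-2 : ℝ) 2 ×ˢ Icc (-1 : ℝ) 1 :=
    Set.prod_mono Ioo_subset_Icc_self Ioo_subset_Icc_self
  have hint : ∀ g : ℝ × ℝ → ℝ, Continuous g →
      IntegrableOn (fun p => uEx64 p * g p) (Ioo (-2 : ℝ) 2 ×ˢ Ioo (-1 : ℝ) 1) := by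
    intro g hg
    exact (((uEx64_cont.mul hg).continuousOn).integrableOn_compact hK).mono_set hsub
  have hintxx := hint _ hxxc
  have hintyy := hint _ hyyc
  -- split the integral
  have hsplit : ∫ p in Ioo (-2 : ℝ) 2 ×ˢ Ioo (-1 : ℝ) 1, uEx64 p * lap2 φ p
      = (∫ p in Ioo (-2 : ℝ) 2 ×ˢ Ioo (-1 : ℝ) 1, uEx64 p * pdx (pdx φ) p)
        + ∫ p in Ioo (-2 : ℝ) 2 ×ˢ Ioo (-1 : ℝ) 1, uEx64 p * pdy (pdy φ) p := by
    rw [← integral_add hintxx hintyy]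
    refine integral_congr_ae (Filter.Eventually.of_forall fun p => ?_)
    show uEx64 p * lap2 φ p = uEx64 p * pdx (pdx φ) p + uEx64 p * pdy (pdy φ) p
    rw [lap2_eq hφ p]; ring
  -- xx term
  have hIxx : ∫ p in Ioo (-2 : ℝ) 2 ×ˢ Ioo (-1 : ℝ) 1, uEx64 p * pdx (pdx φ) p
      = ∫ y in Ioo (-1 : ℝ) 1, Bfn y * (2 * φ (1, y) - 2 * φ (-1, y)) := by
    rw [setIntegral_prod_symm' _ _ _ hintxx]
    refine integral_congr_ae (Filter.Eventually.of_forall fun y => ?_)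
    show (∫ x in Ioo (-2 : ℝ) 2, uEx64 (x, y) * pdx (pdx φ) (x, y))
      = Bfn y * (2 * φ (1, y) - 2 * φ (-1, y))
    have e : (fun x => uEx64 (x, y) * pdx (pdx φ) (x, y))
        = fun x => Bfn y * (Afn x * deriv (deriv (fun x' => φ (x', y))) x) := by
      funext x
      rw [uEx64_eq, dd_slice_x hφ]; ring
    rw [e, integral_const_mul,
      ibp_A (fun x' => φ (x', y)) (slice_x_contDiff hφ y) (hzy y) (hzy' y)]
  -- yy term
  have hIyy : ∫ p in Ioo (-2 : ℝ) 2 ×ˢ Ioo (-1 : ℝ) 1, uEx64 p * pdy (pdy φ) p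
      = ∫ x in Ioo (-2 : ℝ) 2, Afn x * (-(2 * φ (x, 0))) := by
    rw [Measure.volume_eq_prod, setIntegral_prod _ (by rwa [← Measure.volume_eq_prod])]
    refine integral_congr_ae (Filter.Eventually.of_forall fun x => ?_)
    show (∫ y in Ioo (-1 : ℝ) 1, uEx64 (x, y) * pdy (pdy φ) (x, y))
      = Afn x * (-(2 * φ (x, 0)))
    have e : (fun y => uEx64 (x, y) * pdy (pdy φ) (x, y))
        = fun y => Afn x * (Bfn y * deriv (deriv (fun y' => φ (x, y'))) y) := by
      funext y
      rw [uEx64_eq, dd_slice_y hφ]; ring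
    rw [e, integral_const_mul,
      ibp_B (fun y' => φ (x, y')) (slice_y_contDiff hφ x) (hzx x) (hzx' x)]
  -- right-hand side integrals
  have hR0 : ∫ x in (-2 : ℝ)..2, uEx64 (x, 0) * φ (x, 0)
      = ∫ x in Ioo (-2 : ℝ) 2, Afn x * φ (x, 0) := by
    rw [intervalIntegral.integral_of_le (by norm_num : (-2:ℝ) ≤ 2), integral_Ioc_eq_integral_Ioo]
    refine integral_congr_ae (Filter.Eventually.of_forall fun x => ?_)
    show uEx64 (x, 0) * φ (x, 0) = Afn x * φ (x, 0)
    rw [uEx64_eq]; simp [Bfn]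
  have hR1 : ∫ y in (-1 : ℝ)..1, uEx64 (-1, y) * φ (-1, y)
      = ∫ y in Ioo (-1 : ℝ) 1, Bfn y * φ (-1, y) := by
    rw [intervalIntegral.integral_of_le (by norm_num : (-1:ℝ) ≤ 1), integral_Ioc_eq_integral_Ioo]
    refine integral_congr_ae (Filter.Eventually.of_forall fun y => ?_)
    show uEx64 (-1, y) * φ (-1, y) = Bfn y * φ (-1, y)
    rw [uEx64_eq]
    have h : Afn (-1) = 1 := by norm_num [Afn]
    rw [h]; ring
  have hR2 : ∫ y in (-1 : ℝ)..1, uEx64 (1, y) * φ (1, y)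
      = ∫ y in Ioo (-1 : ℝ) 1, -(Bfn y * φ (1, y)) := by
    rw [intervalIntegral.integral_of_le (by norm_num : (-1:ℝ) ≤ 1), integral_Ioc_eq_integral_Ioo]
    refine integral_congr_ae (Filter.Eventually.of_forall fun y => ?_)
    show uEx64 (1, y) * φ (1, y) = -(Bfn y * φ (1, y))
    rw [uEx64_eq]
    have h : Afn (1) = -1 := by norm_num [Afn]
    rw [h]; ring
  -- assemble
  have hBc1 : Continuous fun y => Bfn y * φ (1, y) :=
    Bfn_cont.mul (hφ.continuous.comp (continuous_const.prodMk continuous_id))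
  have hBc2 : Continuous fun y => Bfn y * φ (-1, y) :=
    Bfn_cont.mul (hφ.continuous.comp (continuous_const.prodMk continuous_id))
  have hAc : Continuous fun x => Afn x * φ (x, 0) :=
    Afn_cont.mul (hφ.continuous.comp (continuous_id.prodMk continuous_const))
  have hi1 : IntegrableOn (fun y => Bfn y * φ (1, y)) (Ioo (-1 : ℝ) 1) :=
    ((hBc1.continuousOn).integrableOn_compact isCompact_Icc).mono_set Ioo_subset_Icc_self
  have hi2 : IntegrableOn (fun y => Bfn y * φ (-1, y)) (Ioo (-1 : ℝ) 1) :=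
    ((hBc2.continuousOn).integrableOn_compact isCompact_Icc).mono_set Ioo_subset_Icc_self
  rw [hsplit, hIxx, hIyy, hR0, hR1, hR2]
  have h1 : ∫ y in Ioo (-1 : ℝ) 1, Bfn y * (2 * φ (1, y) - 2 * φ (-1, y))
      = 2 * (∫ y in Ioo (-1 : ℝ) 1, Bfn y * φ (1, y))
        - 2 * ∫ y in Ioo (-1 : ℝ) 1, Bfn y * φ (-1, y) := by
    rw [← integral_const_mul, ← integral_const_mul, ← integral_sub (hi1.const_mul 2) (hi2.const_mul 2)]
    refine integral_congr_ae (Filter.Eventually.of_forall fun y => ?_)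
    ring
  have h2 : ∫ x in Ioo (-2 : ℝ) 2, Afn x * (-(2 * φ (x, 0)))
      = -(2 * ∫ x in Ioo (-2 : ℝ) 2, Afn x * φ (x, 0)) := by
    rw [← integral_const_mul]
    rw [show (fun x => Afn x * (-(2 * φ (x, 0)))) = fun x => -(2 * (Afn x * φ (x, 0))) from
      funext fun x => by ring]
    rw [integral_neg]
  rw [h1, h2, integral_neg]
  ring
end
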